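/- arXiv:2508.14516 — 5 statements merged into one kernel-verified Lean document; each statement's English description precedes it below -/
import Mathlib

section
/- Let g, h : 2^E → ℝ≥0 be monotone and submodular with g(E) = h(E). Then there exists an ordering π = (e_1, …, e_n) of E such that for every k ∈ {1, …, n} and every S ⊆ E with |S| = k, 2·f(S_k) ≥ f(S). -/
namespace IncDec

open Finset

variable {α : Type*} [Fintype α] [DecidableEq α]

/-- Marginal gain `F(x | S) = F(S ∪ {x}) - F(S)`. -/
def marg (F : Finset α → ℝ) (x : α) (S : Finset α) : ℝ := F (insert x S) - F S

/-- Marginal gain of a set: `F(T | S) = F(T ∪ S) - F(S)`. -/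
def margSet (F : Finset α → ℝ) (T S : Finset α) : ℝ := F (T ∪ S) - F S

/-- Monotone set function. -/
def Mono (F : Finset α → ℝ) : Prop := ∀ ⦃S T : Finset α⦄, S ⊆ T → F S ≤ F T

/-- Nonnegative set function. -/
def Nonneg (F : Finset α → ℝ) : Prop := ∀ S : Finset α, 0 ≤ F S

/-- The combined objective `f(S) = h(S) + g(E \ S)`. -/
def fObj (g h : Finset α → ℝ) (S : Finset α) : ℝ := h S + g Sᶜ

/-- `F` has generic submodularity ratio at least `γ`. -/
def GenSubRatioGE (F : Finset α → ℝ) (γ : ℝ) : Prop :=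
  ∀ A B : Finset α, ∀ e : α, marg F e A ≥ γ * marg F e (A ∪ B)

/-- `F` has curvature at most `c`. -/
def CurvatureLE (F : Finset α → ℝ) (c : ℝ) : Prop :=
  ∀ A B : Finset α, ∀ e : α, e ∉ B → marg F e (A ∪ B) ≥ (1 - c) * marg F e A

/-- Submodular set function. -/
def Submodular (F : Finset α → ℝ) : Prop :=
  ∀ ⦃S T : Finset α⦄, S ⊆ T → ∀ e : α, e ∉ T → marg F e T ≤ marg F e S

/-- Modular set function. -/
def Modular (F : Finset α → ℝ) : Prop := ∀ S : Finset α, F S = ∑ e ∈ S, F {e}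

/-- Gross substitute set function. -/
def GrossSubstitute (F : Finset α → ℝ) : Prop :=
  Submodular F ∧
    ∀ A B : Finset α, Disjoint A B → 2 ≤ B.card → ∀ b ∈ B,
      ∃ b' ∈ B.erase b,
        marg F b A + margSet F (B.erase b) A ≤ marg F b' A + margSet F (B.erase b') A

/-- The set of ratios appearing in the definition of the curvature. -/
def curvRatioSet (F : Finset α → ℝ) : Set ℝ :=
  {r | ∃ A B : Finset α, ∃ e : α, e ∉ B ∧ 0 < marg F e A ∧ r = marg F e (A ∪ B) / marg F e A}

/-- `F` has curvature exactly `c` (with `min ∅ := 1`, i.e. `c = 0` if the ratio set is empty). -/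
def CurvatureEq (F : Finset α → ℝ) (c : ℝ) : Prop :=
  (¬ (curvRatioSet F).Nonempty ∧ c = 0) ∨ IsLeast (curvRatioSet F) (1 - c)

/-- The set of ratios appearing in the definition of the generic submodularity ratio. -/
def gsRatioSet (F : Finset α → ℝ) : Set ℝ :=
  {r | ∃ A B : Finset α, ∃ e : α, 0 < marg F e (A ∪ B) ∧ r = marg F e A / marg F e (A ∪ B)}

/-- `F` has generic submodularity ratio exactly `γ` (with `min ∅ := 1`). -/
def GenSubRatioEq (F : Finset α → ℝ) (γ : ℝ) : Prop :=
  (¬ (gsRatioSet F).Nonempty ∧ γ = 1) ∨ IsLeast (gsRatioSet F) γ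

/-- The singleton-based ratio set `{F(e | E \ {e}) / F({e}) : e ∈ E, F({e}) > 0}`. -/
def curvSingletonSet (F : Finset α → ℝ) : Set ℝ :=
  {r | ∃ e : α, 0 < F {e} ∧ r = marg F e ({e}ᶜ) / F {e}}

/-- A run of the double-greedy algorithm for `g` and `h`: distinct elements `elt 0, …,
`elt (n-1)` enumerating `E` (`elt i` is the element `e*_{i+1}` of the paper), together with the
sets `H i`, `G i` (for `0 ≤ i ≤ n`), each new element maximizing the larger marginal gain and
being added to the side realizing it. -/
structure DGRun (α : Type*) [Fintype α] [DecidableEq α] (g h : Finset α → ℝ) where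
  elt : ℕ → α
  H : ℕ → Finset α
  G : ℕ → Finset α
  H0 : H 0 = ∅
  G0 : G 0 = ∅
  mem : ∀ i < Fintype.card α, elt i ∉ H i ∪ G i
  distinct : ∀ i < Fintype.card α, ∀ j < Fintype.card α, elt i = elt j → i = j
  enum : ∀ x : α, ∃ i < Fintype.card α, elt i = x
  greedy : ∀ i < Fintype.card α, ∀ x : α, x ∉ H i ∪ G i →
      max (marg g x (G i)) (marg h x (H i)) ≤ max (marg g (elt i) (G i)) (marg h (elt i) (H i))
  step : ∀ i < Fintype.card α,
      (H (i + 1) = insert (elt i) (H i) ∧ G (i + 1) = G i ∧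
        marg g (elt i) (G i) ≤ marg h (elt i) (H i)) ∨
      (G (i + 1) = insert (elt i) (G i) ∧ H (i + 1) = H i ∧
        marg h (elt i) (H i) ≤ marg g (elt i) (G i))

/-- `phi R i` is the increment `φ_{i+1}` of the double-greedy run `R`. -/
def phi {g h : Finset α → ℝ} (R : DGRun α g h) (i : ℕ) : ℝ :=
  max (marg g (R.elt i) (R.G i)) (marg h (R.elt i) (R.H i))

/-! Since `f(S) ≤ h(E) + g(E) = 2 g(E)` by monotonicity, it suffices to find an ordering all of
whose prefixes `P` satisfy `f(P) ≥ g(E)`. Run the double greedy from `H = G = ∅`, sending each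
element to the side (`h` on `H`, `g` on `G`) with the larger marginal gain, and order `E` as the
`h`-side in order of insertion followed by the `g`-side in reverse. A prefix `P` inside the
`h`-side has `g(E) - g(E \ P) ≤ h(P) - h(∅)` by telescoping and submodularity of `g`; a longer
prefix is the complement of an initial segment of the `g`-side, which is the symmetric case. -/

theorem toFinset_take_eq_compl_toFinset_drop {l : List α} (hl : l.Nodup) (hmem : ∀ x, x ∈ l)
    (k : ℕ) : (l.take k).toFinset = (l.drop k).toFinsetᶜ := by
  rw [← List.take_append_drop k l] at hl
  refine (IsCompl.of_eq ?_ ?_).eq_compl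
  · exact disjoint_iff.1 (List.disjoint_toFinset_iff_disjoint.2 (List.disjoint_of_nodup_append hl))
  · refine top_unique fun x _ => ?_
    simpa [← List.mem_append] using hmem x

/-- One admissible run of the double greedy on the list `xs`, starting from the sides `H` and `G`:
`A` lists the elements sent to the `h`-side and `B` those sent to the `g`-side, in order. Ties may
go either way, which makes the notion symmetric in `g` and `h`. -/
inductive GreedySplit (g h : Finset α → ℝ) :
    List α → Finset α → Finset α → List α → List α → Prop
  | nil (H G : Finset α) : GreedySplit g h [] H G [] []
  | cons_left {x : α} {xs A B : List α} {H G : Finset α} : marg g x G ≤ marg h x H →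
      GreedySplit g h xs (insert x H) G A B → GreedySplit g h (x :: xs) H G (x :: A) B
  | cons_right {x : α} {xs A B : List α} {H G : Finset α} : marg h x H ≤ marg g x G →
      GreedySplit g h xs H (insert x G) A B → GreedySplit g h (x :: xs) H G A (x :: B)

omit [Fintype α] in
theorem exists_greedySplit (g h : Finset α → ℝ) :
    ∀ (xs : List α) (H G : Finset α), ∃ A B, GreedySplit g h xs H G A B
  | [], H, G => ⟨[], [], .nil H G⟩
  | x :: xs, H, G => by
    rcases le_total (marg g x G) (marg h x H) with hle | hle
    · obtain ⟨A, B, hs⟩ := exists_greedySplit g h xs (insert x H) G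
      exact ⟨x :: A, B, .cons_left hle hs⟩
    · obtain ⟨A, B, hs⟩ := exists_greedySplit g h xs H (insert x G)
      exact ⟨A, x :: B, .cons_right hle hs⟩

namespace GreedySplit

variable {g h : Finset α → ℝ} {xs A B : List α} {H G : Finset α}

omit [Fintype α] in
theorem swap (hs : GreedySplit g h xs H G A B) : GreedySplit h g xs G H B A := by
  induction hs with
  | nil H G => exact .nil G H
  | cons_left hle _ ih => exact .cons_right hle ih
  | cons_right hle _ ih => exact .cons_left hle ih

omit [Fintype α] in
theorem perm (hs : GreedySplit g h xs H G A B) : (A ++ B).Perm xs := by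
  induction hs with
  | nil => rfl
  | cons_left _ _ ih => exact ih.cons _
  | cons_right _ _ ih => exact List.perm_middle.trans (ih.cons _)

omit [Fintype α] in
/-- Along the run, every element `x` sent to the `h`-side satisfies
`g(x | X) ≤ g(x | G) ≤ h(x | H)` for any `X ⊇ G` (submodularity of `g`); telescoping over the
first `k` of them gives the bound. -/
theorem margSet_take_left_le (hg : Submodular g) (hs : GreedySplit g h xs H G A B)
    (hA : A.Nodup) (k : ℕ) {X : Finset α} (hGX : G ⊆ X) (hBX : ∀ b ∈ B, b ∈ X)
    (hAX : ∀ a ∈ A.take k, a ∉ X) :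
    margSet g (A.take k).toFinset X ≤ margSet h (A.take k).toFinset H := by
  induction hs generalizing k X with
  | nil => simp [margSet]
  | @cons_left x xs A B H G hle _ ih =>
    cases k with
    | zero => simp [margSet]
    | succ k =>
      obtain ⟨hxA, hA⟩ := List.nodup_cons.mp hA
      simp only [List.take_succ_cons, List.mem_cons, forall_eq_or_imp] at hAX
      have hxX : x ∉ X := hAX.1
      have hrest := ih hA k (hGX.trans (subset_insert x X))
        (fun b hb => mem_insert_of_mem (hBX b hb)) fun a ha => by
          simp only [mem_insert, not_or]
          exact ⟨fun hax => hxA (hax ▸ List.mem_of_mem_take ha), hAX.2 a ha⟩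
      have hgX : marg g x X ≤ marg g x G := hg hGX x hxX
      simp only [margSet, marg, List.take_succ_cons, List.toFinset_cons, insert_union,
        ← union_insert] at hrest hgX hle ⊢
      linarith
  | cons_right _ _ ih =>
    simp only [List.mem_cons, forall_eq_or_imp] at hBX
    exact ih hA k (insert_subset hBX.1 hGX) hBX.2 hAX

theorem le_fObj_take_left (hg : Submodular g) (hh : 0 ≤ h ∅)
    (hs : GreedySplit g h xs ∅ ∅ A B) (hnd : (A ++ B).Nodup) (k : ℕ) : g univ ≤ fObj g h (A.take k).toFinset := by
  have hAB := List.disjoint_of_nodup_append hnd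
  have key := hs.margSet_take_left_le hg (List.Nodup.of_append_left hnd) k
    (empty_subset (A.take k).toFinsetᶜ)
    (fun b hb => mem_compl.2 fun hbP => hAB (List.mem_of_mem_take (List.mem_toFinset.1 hbP)) hb)
    (fun a ha => by simpa using ha)
  rw [margSet, margSet, union_compl, union_empty] at key
  rw [fObj]
  linarith

theorem le_fObj_take_append_reverse (hg : Submodular g) (hh : Submodular h) (hg0 : 0 ≤ g ∅)
    (hh0 : 0 ≤ h ∅) (heq : g univ = h univ) (hs : GreedySplit g h xs ∅ ∅ A B)
    (hnd : (A ++ B).Nodup) (hmem : ∀ x, x ∈ A ++ B) (k : ℕ) :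
    g univ ≤ fObj g h ((A ++ B.reverse).take k).toFinset := by
  rcases le_or_gt k A.length with hk | hk
  · rw [List.take_append_of_le_length hk]
    exact hs.le_fObj_take_left hg hh0 hnd k
  -- the prefix is the complement of an initial segment of `B`: use the run with `g`, `h` swapped
  · set j := B.length - (k - A.length)
    have hdrop : (A ++ B.reverse).drop k = (B.take j).reverse := by
      rw [List.drop_append, List.drop_of_length_le hk.le, List.nil_append, List.drop_reverse]
    have hprefix : ((A ++ B.reverse).take k).toFinset = (B.take j).toFinsetᶜ := by
      rw [toFinset_take_eq_compl_toFinset_drop ((B.reverse_perm.append_left A).nodup_iff.2 hnd)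
        (by simpa using hmem), hdrop, List.toFinset_reverse]
    have hB := hs.swap.le_fObj_take_left hh hg0 (List.nodup_append_comm.1 hnd) j
    rw [hprefix, fObj, compl_compl, heq, add_comm]
    exact hB

end GreedySplit

theorem stmt12 (g h : Finset α → ℝ)
    (hgm : Mono g) (hhm : Mono h) (hg0 : Nonneg g) (hh0 : Nonneg h)
    (hgs : Submodular g) (hhs : Submodular h)
    (heq : g Finset.univ = h Finset.univ) :
    ∃ π : List α, π.Nodup ∧ (∀ x : α, x ∈ π) ∧
      ∀ k : ℕ, 1 ≤ k → k ≤ Fintype.card α → ∀ S : Finset α, S.card = k →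
        2 * fObj g h (π.take k).toFinset ≥ fObj g h S := by
  obtain ⟨A, B, hs⟩ := exists_greedySplit g h (univ : Finset α).toList ∅ ∅
  have hperm : (A ++ B.reverse).Perm (univ : Finset α).toList :=
    (B.reverse_perm.append_left A).trans hs.perm
  have hnd : (A ++ B).Nodup := hs.perm.nodup_iff.2 (nodup_toList _)
  have hmem (x : α) : x ∈ A ++ B := hs.perm.mem_iff.2 (mem_toList.2 (mem_univ x))
  refine ⟨A ++ B.reverse, hperm.nodup_iff.2 (nodup_toList _),
    fun x => hperm.mem_iff.2 (mem_toList.2 (mem_univ x)), fun k _ _ S _ => ?_⟩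
  have hprefix := hs.le_fObj_take_append_reverse hgs hhs (hg0 ∅) (hh0 ∅) heq hnd hmem k
  have hS : fObj g h S ≤ h univ + g univ :=
    add_le_add (hhm (subset_univ S)) (hgm (subset_univ Sᶜ))
  linarith

end IncDec
end

section
/- Let F : 2^E → ℝ≥0 be monotone with generic submodularity ratio at least γ ∈ (0,1]. Then for all A, B ⊆ E with F(B | A) > 0, Σ_{b ∈ B} F(b | A) ≥ γ·F(B | A); that is, the submodularity ratio of F is at least its generic submodularity ratio. -/
namespace IncDec

open Finset

section

variable {α : Type*} [DecidableEq α]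

theorem margSet_insert (F : Finset α → ℝ) (a : α) (B A : Finset α) :
    margSet F (insert a B) A = marg F a (A ∪ B) + margSet F B A := by
  rw [margSet, margSet, marg, insert_union, union_comm A B]
  ring

theorem GenSubRatioGE.mul_margSet_le_sum_marg {F : Finset α → ℝ} {γ : ℝ}
    (hFγ : GenSubRatioGE F γ) (A B : Finset α) : γ * margSet F B A ≤ ∑ b ∈ B, marg F b A := by
  induction B using Finset.induction with
  | empty => simp [margSet]
  | insert a B ha ih =>
    rw [margSet_insert, sum_insert ha, mul_add]
    exact add_le_add (hFγ A B a) ih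

end

variable {α : Type*} [Fintype α] [DecidableEq α]

theorem stmt14_general (F : Finset α → ℝ) (γ : ℝ)
    (hFγ : GenSubRatioGE F γ) :
    ∀ A B : Finset α, 0 < margSet F B A →
      ∑ b ∈ B, marg F b A ≥ γ * margSet F B A :=
  fun A B _ => hFγ.mul_margSet_le_sum_marg A B

theorem stmt14 (F : Finset α → ℝ) (γ : ℝ) (hγ0 : 0 < γ) (hγ1 : γ ≤ 1)
    (hFm : Mono F) (hF0 : Nonneg F) (hFγ : GenSubRatioGE F γ) :
    ∀ A B : Finset α, 0 < margSet F B A →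
      ∑ b ∈ B, marg F b A ≥ γ * margSet F B A :=
  stmt14_general F γ hFγ

end IncDec
end

section
/- For every integer k ≥ 2 there exist a finite set E with |E| = 2k, a monotone submodular function h : 2^E → ℝ≥0 and a monotone modular function g : 2^E → ℝ≥0 with g(∅) = h(∅) = 0, together with a double-greedy run for g and h whose first k steps all add the chosen element to H (so |H_k| = k and G_k = ∅), such that f(H_k) = k^k − (k−1)^k while there exists S ⊆ E with |S| = k and f(S) = 2k^k − (k−1)^k. (Since (2k^k − (k−1)^k)/(k^k − (k−1)^k) → 1 + e/(e−1) as k → ∞, the double-greedy algorithm is no better than (1 + e/(e−1))-competitive for monotone submodular g and h.) -/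
namespace IncDec

open Finset

variable {α : Type*} [Fintype α] [DecidableEq α]

/-!
Split `E = Fin (2 * k)` into the low half `A = {x < k}` and the high half `B`. With
`q = (k - 1) / k` and `c = k ^ (k - 1)`, let `h S = c (k - (k - |S ∩ B|) q ^ |S ∩ A|)` and let
`g` be modular with weight `c q ^ x` on a low element `x` and `0` on high ones. While `H` is the
initial segment `{0, …, i - 1}`, every remaining element has `h`-gain `c q ^ min i k`, which
dominates every `g`-gain, so processing `0, 1, …, 2k - 1` and always adding to `H` is a
double-greedy run. After `k` steps `H = A` and `f A = h A = k ^ k - (k - 1) ^ k`, whereas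
`f B = h B + g A = k ^ k + c ∑_{j < k} q ^ j = 2 k ^ k - (k - 1) ^ k`.
-/

section SumOfWeights

variable {β : Type*} (w : β → ℝ)

lemma modular_sum : Modular fun S : Finset β ↦ ∑ e ∈ S, w e := fun S ↦ by simp

lemma mono_sum (hw : ∀ e, 0 ≤ w e) : Mono fun S : Finset β ↦ ∑ e ∈ S, w e :=
  fun _ _ hST ↦ sum_le_sum_of_subset_of_nonneg hST fun e _ _ ↦ hw e

lemma nonneg_sum (hw : ∀ e, 0 ≤ w e) : Nonneg fun S : Finset β ↦ ∑ e ∈ S, w e :=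
  fun _ ↦ sum_nonneg fun e _ ↦ hw e

lemma marg_sum_empty [DecidableEq β] (x : β) :
    marg (fun S : Finset β ↦ ∑ e ∈ S, w e) x ∅ = w x := by
  simp [marg]

end SumOfWeights

section InitialSegments

variable {n : ℕ}

def initSeg (n i : ℕ) : Finset (Fin n) := {x | (x : ℕ) < i}

@[simp]
lemma mem_initSeg {i : ℕ} {x : Fin n} : x ∈ initSeg n i ↔ (x : ℕ) < i := by
  simp [initSeg]

lemma card_initSeg {i : ℕ} (hi : i ≤ n) : #(initSeg n i) = i := by
  rw [initSeg, Fin.card_filter_val_lt, min_eq_right hi]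

lemma insert_initSeg {i : ℕ} {x : Fin n} (hx : (x : ℕ) = i) :
    insert x (initSeg n i) = initSeg n (i + 1) := by
  ext y
  simp only [mem_insert, mem_initSeg, Fin.ext_iff, hx]
  omega

lemma sum_initSeg {M : Type*} [AddCommMonoid M] (f : ℕ → M) {i : ℕ} (hi : i ≤ n) :
    ∑ x ∈ initSeg n i, f x = ∑ j ∈ range i, f j := by
  induction i with
  | zero => simp [initSeg]
  | succ i ih =>
    rw [← insert_initSeg (x := ⟨i, hi⟩) rfl, sum_insert (by simp), ih (by omega), sum_range_succ,
      add_comm]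

theorem exists_dgRun_initSeg {g h : Finset (Fin n) → ℝ} (hn : 0 < n)
    (hgreedy : ∀ i (hi : i < n), ∀ x ∉ initSeg n i,
      max (marg g x ∅) (marg h x (initSeg n i)) ≤ marg h ⟨i, hi⟩ (initSeg n i)) :
    ∃ R : DGRun (Fin n) g h, (∀ i, R.H i = initSeg n i) ∧ (∀ i, R.G i = ∅) ∧
      ∀ i (hi : i < n), R.elt i = ⟨i, hi⟩ := by
  have elt_eq : ∀ i (hi : i < n), (⟨i % n, Nat.mod_lt i hn⟩ : Fin n) = ⟨i, hi⟩ :=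
    fun i hi ↦ Fin.ext (Nat.mod_eq_of_lt hi)
  have not_mem : ∀ i (hi : i < n), (⟨i, hi⟩ : Fin n) ∉ initSeg n i := by simp
  refine ⟨
    { elt := fun i ↦ ⟨i % n, Nat.mod_lt i hn⟩
      H := initSeg n
      G := fun _ ↦ ∅
      H0 := by ext; simp
      G0 := rfl
      mem := ?_
      distinct := ?_
      enum := ?_
      greedy := ?_
      step := ?_ }, fun _ ↦ rfl, fun _ ↦ rfl, elt_eq⟩ <;> simp only [Fintype.card_fin, union_empty]
  · intro i hi
    rw [elt_eq i hi]
    exact not_mem i hi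
  · intro i hi j hj hij
    rw [elt_eq i hi, elt_eq j hj] at hij
    exact Fin.mk.inj hij
  · exact fun x ↦ ⟨x, x.isLt, elt_eq x x.isLt⟩
  · intro i hi x hx
    rw [elt_eq i hi]
    exact (hgreedy i hi x hx).trans (le_max_right _ _)
  · intro i hi
    rw [elt_eq i hi]
    exact Or.inl ⟨(insert_initSeg (x := ⟨i, hi⟩) rfl).symm, trivial,
      (le_max_left _ _).trans (hgreedy i hi _ (not_mem i hi))⟩

end InitialSegments

section HardInstance

variable (k : ℕ)

noncomputable def ratio : ℝ := ((k : ℝ) - 1) / k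

noncomputable def scale : ℝ := (k : ℝ) ^ (k - 1)

def lowCount (S : Finset (Fin (2 * k))) : ℕ := #(S.filter fun x : Fin (2 * k) ↦ (x : ℕ) < k)

def highCount (S : Finset (Fin (2 * k))) : ℕ := #(S.filter fun x : Fin (2 * k) ↦ ¬ (x : ℕ) < k)

noncomputable def residual (S : Finset (Fin (2 * k))) : ℝ :=
  ((k : ℝ) - highCount k S) * ratio k ^ lowCount k S

noncomputable def hardH (S : Finset (Fin (2 * k))) : ℝ := scale k * (k - residual k S)

noncomputable def hardWeight (x : Fin (2 * k)) : ℝ :=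
  if (x : ℕ) < k then scale k * ratio k ^ (x : ℕ) else 0

variable {k}

lemma ratio_nonneg (hk : 0 < k) : 0 ≤ ratio k := by
  have : (1 : ℝ) ≤ k := by exact_mod_cast hk
  exact div_nonneg (by linarith) (by linarith)

lemma ratio_le_one : ratio k ≤ 1 :=
  div_le_one_of_le₀ (by linarith) (Nat.cast_nonneg k)

lemma one_sub_ratio_mul (hk : 0 < k) : (1 - ratio k) * k = 1 := by
  have : (k : ℝ) ≠ 0 := by positivity
  rw [ratio]
  field_simp
  ring

lemma scale_nonneg : 0 ≤ scale k := by
  unfold scale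
  positivity

lemma scale_mul (hk : 0 < k) : scale k * k = (k : ℝ) ^ k := by
  rw [scale, ← pow_succ, Nat.sub_add_cancel hk]

lemma scale_mul_mul_ratio_pow (hk : 0 < k) :
    scale k * k * ratio k ^ k = ((k : ℝ) - 1) ^ k := by
  have : (k : ℝ) ≠ 0 := by positivity
  rw [scale_mul hk, ← mul_pow, ratio, mul_div_cancel₀ _ this]

lemma lowCount_add_highCount (S : Finset (Fin (2 * k))) :
    lowCount k S + highCount k S = #S :=
  card_filter_add_card_filter_not _

lemma lowCount_mono {S T : Finset (Fin (2 * k))} (h : S ⊆ T) : lowCount k S ≤ lowCount k T :=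
  card_le_card (filter_subset_filter _ h)

lemma highCount_mono {S T : Finset (Fin (2 * k))} (h : S ⊆ T) :
    highCount k S ≤ highCount k T :=
  card_le_card (filter_subset_filter _ h)

lemma highCount_le (S : Finset (Fin (2 * k))) : highCount k S ≤ k := by
  have hlow : lowCount k univ = k := by
    rw [lowCount, Fin.card_filter_val_lt]
    omega
  have := lowCount_add_highCount (k := k) univ
  have := highCount_mono (subset_univ S)
  rw [card_univ, Fintype.card_fin] at *
  omega

lemma residual_antitone (hk : 0 < k) {S T : Finset (Fin (2 * k))} (h : S ⊆ T) :
    residual k T ≤ residual k S := by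
  have hT : (highCount k T : ℝ) ≤ k := by exact_mod_cast highCount_le T
  have hST : (highCount k S : ℝ) ≤ highCount k T := by exact_mod_cast highCount_mono h
  have hq := ratio_nonneg hk
  calc residual k T ≤ ((k : ℝ) - highCount k T) * ratio k ^ lowCount k S :=
        mul_le_mul_of_nonneg_left (pow_le_pow_of_le_one hq ratio_le_one (lowCount_mono h))
          (by linarith)
    _ ≤ residual k S :=
        mul_le_mul_of_nonneg_right (by linarith) (pow_nonneg hq _)

lemma residual_empty : residual k ∅ = k := by
  simp [residual, lowCount, highCount]

lemma residual_le (hk : 0 < k) (S : Finset (Fin (2 * k))) : residual k S ≤ k :=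
  residual_empty (k := k) ▸ residual_antitone hk (empty_subset S)

lemma marg_hardH_of_lt {x : Fin (2 * k)} {S : Finset (Fin (2 * k))} (hx : (x : ℕ) < k)
    (hxS : x ∉ S) : marg (hardH k) x S = scale k * (1 - ratio k) * residual k S := by
  have hlow : lowCount k (insert x S) = lowCount k S + 1 := by
    rw [lowCount, filter_insert, if_pos hx, card_insert_of_notMem (by simp [hxS]), lowCount]
  have hhigh : highCount k (insert x S) = highCount k S := by
    rw [highCount, filter_insert, if_neg (not_not.2 hx), highCount]
  simp only [marg, hardH, residual, hlow, hhigh, pow_succ]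
  ring

lemma marg_hardH_of_not_lt {x : Fin (2 * k)} {S : Finset (Fin (2 * k))} (hx : ¬ (x : ℕ) < k)
    (hxS : x ∉ S) : marg (hardH k) x S = scale k * ratio k ^ lowCount k S := by
  have hlow : lowCount k (insert x S) = lowCount k S := by
    rw [lowCount, filter_insert, if_neg hx, lowCount]
  have hhigh : highCount k (insert x S) = highCount k S + 1 := by
    rw [highCount, filter_insert, if_pos hx, card_insert_of_notMem (by simp [hxS]), highCount]
  simp only [marg, hardH, residual, hlow, hhigh]
  push_cast
  ring

lemma hardH_mono (hk : 0 < k) : Mono (hardH k) := fun _ _ h ↦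
  mul_le_mul_of_nonneg_left (by linarith [residual_antitone hk h]) scale_nonneg

lemma hardH_nonneg (hk : 0 < k) : Nonneg (hardH k) := fun S ↦
  mul_nonneg scale_nonneg (by linarith [residual_le hk S])

lemma hardH_empty : hardH k ∅ = 0 := by
  simp [hardH, residual_empty]

lemma hardH_submodular (hk : 0 < k) : Submodular (hardH k) := by
  intro S T hST e heT
  have heS : e ∉ S := fun h ↦ heT (hST h)
  by_cases he : (e : ℕ) < k
  · rw [marg_hardH_of_lt he heT, marg_hardH_of_lt he heS]
    exact mul_le_mul_of_nonneg_left (residual_antitone hk hST)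
      (mul_nonneg scale_nonneg (by linarith [ratio_le_one (k := k)]))
  · rw [marg_hardH_of_not_lt he heT, marg_hardH_of_not_lt he heS]
    exact mul_le_mul_of_nonneg_left
      (pow_le_pow_of_le_one (ratio_nonneg hk) ratio_le_one (lowCount_mono hST)) scale_nonneg

lemma hardWeight_nonneg (hk : 0 < k) (x : Fin (2 * k)) : 0 ≤ hardWeight k x := by
  unfold hardWeight
  split_ifs
  exacts [mul_nonneg scale_nonneg (pow_nonneg (ratio_nonneg hk) _), le_rfl]

lemma lowCount_initSeg (i : ℕ) : lowCount k (initSeg (2 * k) i) = min i k := by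
  unfold lowCount initSeg
  rw [filter_filter]
  simp only [← lt_min_iff]
  rw [Fin.card_filter_val_lt]
  omega

lemma highCount_initSeg {i : ℕ} (hi : i ≤ 2 * k) :
    highCount k (initSeg (2 * k) i) = i - min i k := by
  have := lowCount_add_highCount (initSeg (2 * k) i)
  rw [card_initSeg hi, lowCount_initSeg] at this
  omega

/-- Low and high elements tie because `(1 - q) k = 1`. -/
lemma marg_hardH_initSeg (hk : 0 < k) {i : ℕ} (hi : i ≤ 2 * k) {x : Fin (2 * k)}
    (hx : x ∉ initSeg (2 * k) i) :
    marg (hardH k) x (initSeg (2 * k) i) = scale k * ratio k ^ min i k := by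
  have hxi : ¬ (x : ℕ) < i := by simpa using hx
  by_cases hxk : (x : ℕ) < k
  · have hik : min i k = i := min_eq_left (by omega)
    rw [marg_hardH_of_lt hxk hx, residual, lowCount_initSeg, highCount_initSeg hi, hik,
      Nat.sub_self, Nat.cast_zero, sub_zero]
    linear_combination (scale k * ratio k ^ i) * one_sub_ratio_mul hk
  · rw [marg_hardH_of_not_lt hxk hx, lowCount_initSeg]

lemma hardWeight_le (hk : 0 < k) {i : ℕ} {x : Fin (2 * k)} (hx : x ∉ initSeg (2 * k) i) :
    hardWeight k x ≤ scale k * ratio k ^ min i k := by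
  have hxi : ¬ (x : ℕ) < i := by simpa using hx
  unfold hardWeight
  split_ifs
  · exact mul_le_mul_of_nonneg_left
      (pow_le_pow_of_le_one (ratio_nonneg hk) ratio_le_one (by omega)) scale_nonneg
  · exact mul_nonneg scale_nonneg (pow_nonneg (ratio_nonneg hk) _)

lemma hard_greedy (hk : 0 < k) (i : ℕ) (hi : i < 2 * k) (x : Fin (2 * k))
    (hx : x ∉ initSeg (2 * k) i) :
    max (marg (fun S ↦ ∑ e ∈ S, hardWeight k e) x ∅) (marg (hardH k) x (initSeg (2 * k) i)) ≤
      marg (hardH k) ⟨i, hi⟩ (initSeg (2 * k) i) := by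
  rw [marg_sum_empty, marg_hardH_initSeg hk hi.le hx, marg_hardH_initSeg hk hi.le (by simp)]
  exact max_le (hardWeight_le hk hx) le_rfl

lemma hardH_initSeg (hk : 0 < k) :
    hardH k (initSeg (2 * k) k) = (k : ℝ) ^ k - ((k : ℝ) - 1) ^ k := by
  rw [hardH, residual, lowCount_initSeg, highCount_initSeg (by omega), min_self, Nat.sub_self,
    ← scale_mul hk, ← scale_mul_mul_ratio_pow hk]
  push_cast
  ring

lemma hardH_compl_initSeg (hk : 0 < k) : hardH k (initSeg (2 * k) k)ᶜ = (k : ℝ) ^ k := by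
  have hlow : lowCount k (initSeg (2 * k) k)ᶜ = 0 := by
    simp [lowCount, filter_eq_empty_iff]
  have hcard : #(initSeg (2 * k) k)ᶜ = k := by
    rw [card_compl, Fintype.card_fin, card_initSeg (by omega)]
    omega
  have hhigh : highCount k (initSeg (2 * k) k)ᶜ = k := by
    have := lowCount_add_highCount (initSeg (2 * k) k)ᶜ
    omega
  rw [hardH, residual, hlow, hhigh, ← scale_mul hk]
  ring

lemma sum_hardWeight_initSeg (hk : 0 < k) :
    ∑ x ∈ initSeg (2 * k) k, hardWeight k x = (k : ℝ) ^ k - ((k : ℝ) - 1) ^ k := by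
  have hsum : ∑ x ∈ initSeg (2 * k) k, hardWeight k x = ∑ j ∈ range k, scale k * ratio k ^ j := by
    rw [← sum_initSeg (n := 2 * k) _ (by omega)]
    exact sum_congr rfl fun x hx ↦ if_pos (by simpa using hx)
  have hgeom := geom_sum_mul_neg (ratio k) k
  rw [hsum, ← mul_sum, ← scale_mul hk, ← scale_mul_mul_ratio_pow hk]
  linear_combination
    (scale k * k) * hgeom - (scale k * ∑ j ∈ range k, ratio k ^ j) * one_sub_ratio_mul hk

lemma sum_hardWeight_compl_initSeg : ∑ x ∈ (initSeg (2 * k) k)ᶜ, hardWeight k x = 0 :=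
  sum_eq_zero fun x hx ↦ if_neg (by simpa using hx)

end HardInstance

theorem stmt15 (k : ℕ) (hk : 2 ≤ k) :
    ∃ g h : Finset (Fin (2 * k)) → ℝ,
      Mono g ∧ Mono h ∧ Nonneg g ∧ Nonneg h ∧
      Submodular h ∧ Modular g ∧ g ∅ = 0 ∧ h ∅ = 0 ∧
      ∃ R : DGRun (Fin (2 * k)) g h,
        (∀ i < k, R.H (i + 1) = insert (R.elt i) (R.H i) ∧ R.G (i + 1) = R.G i) ∧
        (R.H k).card = k ∧ R.G k = ∅ ∧
        fObj g h (R.H k) = (k : ℝ) ^ k - ((k : ℝ) - 1) ^ k ∧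
        ∃ S : Finset (Fin (2 * k)), S.card = k ∧
          fObj g h S = 2 * (k : ℝ) ^ k - ((k : ℝ) - 1) ^ k := by
  have hk0 : 0 < k := by omega
  obtain ⟨R, hH, hG, helt⟩ := exists_dgRun_initSeg (by omega) (hard_greedy hk0)
  refine ⟨_, _, mono_sum _ (hardWeight_nonneg hk0), hardH_mono hk0,
    nonneg_sum _ (hardWeight_nonneg hk0), hardH_nonneg hk0, hardH_submodular hk0,
    modular_sum _, sum_empty, hardH_empty, R, fun i hi ↦ ⟨?_, by rw [hG, hG]⟩, ?_, hG k, ?_,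
    (initSeg (2 * k) k)ᶜ, ?_, ?_⟩
  · rw [hH, hH, helt i (by omega), insert_initSeg rfl]
  · rw [hH, card_initSeg (by omega)]
  · rw [fObj, hH, hardH_initSeg hk0, sum_hardWeight_compl_initSeg, add_zero]
  · rw [card_compl, Fintype.card_fin, card_initSeg (by omega)]
    omega
  · rw [fObj, compl_compl, hardH_compl_initSeg hk0, sum_hardWeight_initSeg hk0]
    ring

end IncDec
end

section
/- There exist a finite set E with |E| = 2, monotone modular functions g, h : 2^E → ℝ≥0 with g(∅) = h(∅) = 0, and a double-greedy run for g and h such that f(H_1) = 1 while there exists S ⊆ E with |S| = 1 and f(S) = 2; hence the double-greedy algorithm is not better than 2-competitive even for monotone modular functions. -/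
namespace IncDec

open Finset

variable {α : Type*} [Fintype α] [DecidableEq α]

section MemIndicator

variable {ι : Type*} [DecidableEq ι]

def memIndicator (a : ι) (S : Finset ι) : ℝ := if a ∈ S then 1 else 0

@[simp]
lemma memIndicator_empty (a : ι) : memIndicator a ∅ = 0 := by
  simp [memIndicator]

lemma memIndicator_nonneg (a : ι) : Nonneg (memIndicator a) := by
  intro S
  unfold memIndicator
  split_ifs <;> norm_num

lemma memIndicator_mono (a : ι) : Mono (memIndicator a) := by
  intro S T hST
  unfold memIndicator
  split_ifs with hS hT <;> first | exact absurd (hST hS) hT | norm_num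

lemma memIndicator_modular (a : ι) : Modular (memIndicator a) := by
  intro S
  simp only [memIndicator, Finset.mem_singleton, Finset.sum_ite_eq]

@[simp]
lemma marg_memIndicator (a x : ι) (S : Finset ι) :
    marg (memIndicator a) x S = if x = a ∧ a ∉ S then 1 else 0 := by
  unfold marg memIndicator
  by_cases ha : a ∈ S <;> rcases eq_or_ne x a with rfl | hx <;> simp [Ne.symm, *]

end MemIndicator

/-- With `g = [0 ∈ ·]` and `h = [1 ∈ ·]` every first move gains `1`; this run breaks the tie
by adding `0` to `G`, so `f(H₁) = f(∅) = g(E) = 1`, whereas `f({1}) = h({1}) + g({0}) = 2`. -/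
def tieBreakRun : DGRun (Fin 2) (memIndicator 0) (memIndicator 1) where
  elt i := if i = 0 then 0 else 1
  H i := if i ≤ 1 then ∅ else {1}
  G i := if i = 0 then ∅ else {0}
  H0 := rfl
  G0 := rfl
  mem i hi := by
    rw [Fintype.card_fin] at hi
    interval_cases i <;> decide
  distinct i hi j hj := by
    rw [Fintype.card_fin] at hi hj
    interval_cases i <;> interval_cases j <;> decide
  enum x := by
    fin_cases x
    exacts [⟨0, by norm_num⟩, ⟨1, by norm_num⟩]
  greedy i hi x hx := by
    rw [Fintype.card_fin] at hi
    interval_cases i <;> fin_cases x <;> simp_all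
  step i hi := by
    rw [Fintype.card_fin] at hi
    interval_cases i
    · exact Or.inr ⟨by decide, by decide, by simp⟩
    · exact Or.inl ⟨by decide, by decide, by simp⟩

theorem stmt16 :
    ∃ g h : Finset (Fin 2) → ℝ,
      Mono g ∧ Mono h ∧ Nonneg g ∧ Nonneg h ∧
      Modular g ∧ Modular h ∧ g ∅ = 0 ∧ h ∅ = 0 ∧
      ∃ R : DGRun (Fin 2) g h,
        fObj g h (R.H 1) = 1 ∧
        ∃ S : Finset (Fin 2), S.card = 1 ∧ fObj g h S = 2 := by
  refine ⟨memIndicator 0, memIndicator 1, memIndicator_mono 0, memIndicator_mono 1,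
    memIndicator_nonneg 0, memIndicator_nonneg 1, memIndicator_modular 0, memIndicator_modular 1,
    memIndicator_empty 0, memIndicator_empty 1, tieBreakRun, ?_, {1}, rfl, ?_⟩
  · simp [fObj, memIndicator, tieBreakRun]
  · have hcompl : ({1}ᶜ : Finset (Fin 2)) = {0} := by decide
    norm_num [fObj, memIndicator, hcompl]

end IncDec
end

section
/- Let g, h : 2^E → ℝ≥0 be monotone with g(∅) = h(∅) = 0 and with generic submodularity ratio at least γ ∈ (0,1], and consider any double-greedy run for g and h. Then for every k ∈ {0, 1, …, n} and every S ⊆ E, g(E \ S) ≤ (1/γ)·(h(H_k) + g(E \ H_k)) = (1/γ)·f(H_k). -/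
namespace IncDec

open Finset

variable {α : Type*} [Fintype α] [DecidableEq α]

/- Along the run, `h(H_k) + γ·g(E \ H_k)` never drops below `γ·g(E)`: moving `e` into `H` costs
`γ·g(e | E \ H_{k+1})` on the `g`-side, which is at most `γ·g(e | G_k)` by the submodularity ratio
(as `G_k ⊆ E \ H_{k+1}`), hence at most the gain `h(e | H_k)` chosen by the greedy step.
Dividing by `γ ≤ 1` and using monotonicity of `g` gives the bound. -/

theorem apply_compl_eq_marg_add {F : Finset α → ℝ} {H : Finset α} {e : α} (he : e ∉ H) :
    F Hᶜ = marg F e (insert e H)ᶜ + F (insert e H)ᶜ := by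
  rw [marg, compl_insert, insert_erase (mem_compl.mpr he)]
  ring

namespace DGRun

variable {g h : Finset α → ℝ} (R : DGRun α g h)

theorem disjoint_H_G {k : ℕ} (hk : k ≤ Fintype.card α) : Disjoint (R.H k) (R.G k) := by
  induction k with
  | zero => simp [R.H0, R.G0]
  | succ k ih =>
    have hmem := R.mem k hk
    rw [mem_union, not_or] at hmem
    rcases R.step k hk with ⟨hH, hG, -⟩ | ⟨hG, hH, -⟩
    · rw [hH, hG, disjoint_insert_left]
      exact ⟨hmem.2, ih (k.le_succ.trans hk)⟩
    · rw [hH, hG, disjoint_insert_right]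
      exact ⟨hmem.1, ih (k.le_succ.trans hk)⟩

theorem G_subset_compl_insert_H {k : ℕ} (hk : k < Fintype.card α) :
    R.G k ⊆ (insert (R.elt k) (R.H k))ᶜ := by
  have hmem := R.mem k hk
  rw [mem_union, not_or] at hmem
  rw [subset_compl_iff_disjoint_left, disjoint_insert_left]
  exact ⟨hmem.2, R.disjoint_H_G hk.le⟩

theorem mul_apply_univ_le {γ : ℝ} (hhe : h ∅ = 0) (hgγ : GenSubRatioGE g γ) {k : ℕ}
    (hk : k ≤ Fintype.card α) : γ * g univ ≤ h (R.H k) + γ * g (R.H k)ᶜ := by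
  induction k with
  | zero => simp [R.H0, hhe]
  | succ k ih =>
    specialize ih (k.le_succ.trans hk)
    rcases R.step k hk with ⟨hH, -, hgain⟩ | ⟨-, hH, -⟩
    · have hH_succ : h (R.H (k + 1)) = h (R.H k) + marg h (R.elt k) (R.H k) := by
        rw [hH, marg]; ring
      have hg_split : g (R.H k)ᶜ = marg g (R.elt k) (R.H (k + 1))ᶜ + g (R.H (k + 1))ᶜ := by
        rw [hH]
        exact apply_compl_eq_marg_add (not_or.mp (mem_union.not.mp (R.mem k hk))).1
      have hratio : γ * marg g (R.elt k) (R.H (k + 1))ᶜ ≤ marg g (R.elt k) (R.G k) := by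
        have := hgγ (R.G k) (R.H (k + 1))ᶜ (R.elt k)
        rwa [union_eq_right.mpr (hH ▸ R.G_subset_compl_insert_H hk)] at this
      calc γ * g univ ≤ h (R.H k) + γ * g (R.H k)ᶜ := ih
        _ = h (R.H k) + γ * marg g (R.elt k) (R.H (k + 1))ᶜ + γ * g (R.H (k + 1))ᶜ := by
          rw [hg_split]; ring
        _ ≤ h (R.H (k + 1)) + γ * g (R.H (k + 1))ᶜ := by linarith
    · rwa [hH]

end DGRun

theorem stmt18_general (g h : Finset α → ℝ) (γ : ℝ) (hγ0 : 0 < γ) (hγ1 : γ ≤ 1)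
    (hgm : Mono g) (hg0 : Nonneg g)
    (hhe : h ∅ = 0)
    (hgγ : GenSubRatioGE g γ)
    (R : DGRun α g h) :
    ∀ k ≤ Fintype.card α, ∀ S : Finset α,
      g Sᶜ ≤ (1 / γ) * (h (R.H k) + g ((R.H k)ᶜ)) ∧
      (1 / γ) * (h (R.H k) + g ((R.H k)ᶜ)) = (1 / γ) * fObj g h (R.H k) := by
  intro k hk S
  refine ⟨?_, rfl⟩
  have hγg : γ * g (R.H k)ᶜ ≤ g (R.H k)ᶜ := mul_le_of_le_one_left (hg0 _) hγ1
  rw [one_div_mul_eq_div, le_div_iff₀ hγ0, mul_comm]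
  calc γ * g Sᶜ ≤ γ * g univ := mul_le_mul_of_nonneg_left (hgm (subset_univ _)) hγ0.le
    _ ≤ h (R.H k) + γ * g (R.H k)ᶜ := R.mul_apply_univ_le hhe hgγ hk
    _ ≤ h (R.H k) + g (R.H k)ᶜ := by linarith

theorem stmt18 (g h : Finset α → ℝ) (γ : ℝ) (hγ0 : 0 < γ) (hγ1 : γ ≤ 1)
    (hgm : Mono g) (hhm : Mono h) (hg0 : Nonneg g) (hh0 : Nonneg h)
    (hge : g ∅ = 0) (hhe : h ∅ = 0)
    (hgγ : GenSubRatioGE g γ) (hhγ : GenSubRatioGE h γ)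
    (R : DGRun α g h) :
    ∀ k ≤ Fintype.card α, ∀ S : Finset α,
      g Sᶜ ≤ (1 / γ) * (h (R.H k) + g ((R.H k)ᶜ)) ∧
      (1 / γ) * (h (R.H k) + g ((R.H k)ᶜ)) = (1 / γ) * fObj g h (R.H k) :=
  stmt18_general g h γ hγ0 hγ1 hgm hg0 hhe hgγ R

end IncDec
end
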